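/- arXiv:1103.3557 — 2 statements merged into one kernel-verified Lean document; each statement's English description precedes it below -/
import Mathlib

section
/- Let K₁,…,K_m be n×n complex matrices with Σᵢ Kᵢ† Kᵢ = I, and suppose that for every unit vector φ ∈ ℂⁿ one has Σ_{i,j} |⟨φ| Kᵢ† Kⱼ |φ⟩|² ≤ 1 − ε for some ε ∈ (0,1). Then (1/n²) Σ_{i,j} |Tr(Kᵢ† Kⱼ)|² ≤ 1 − (1 + 1/n)ε. -/
/-!
Summing the hypothesis over the `4ⁿ` phase vectors `ω = (i^{ζ₁}, …, i^{ζₙ})` replaces the average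
over the unit sphere: the moments `∑_ζ ω̄_a ω_b ω_c ω̄_d` vanish unless `{b, c} = {a, d}`, so for
every `M = Kᵢᴴ Kⱼ` the sum of `|ω† M ω|²` is `4ⁿ (|Tr M|² + ‖M‖² - ∑_a |M_aa|²)` (Frobenius norm),
and it is at most `4ⁿ n² (1 - ε)`. The basis vectors bound the diagonal terms by `n (1 - ε)`, and
`∑_{i,j} ‖Kᵢᴴ Kⱼ‖² = ‖∑ᵢ Kᵢ Kᵢᴴ‖² ≥ |Tr ∑ᵢ Kᵢ Kᵢᴴ|² / n = n`, which leaves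
`∑_{i,j} |Tr Kᵢᴴ Kⱼ|² ≤ n² (1 - ε) - n ε`.
-/

open Matrix Complex Finset
open scoped ComplexConjugate

section PhaseMoments

variable {ι : Type*}

def phaseVec (ζ : ι → Fin 4) : ι → ℂ := fun a => I ^ (ζ a : ℕ)

lemma sum_fin_four_I_pow_mul_conj_pow {p q : ℕ} (hp : p ≤ 2) (hq : q ≤ 2) :
    ∑ k : Fin 4, (I ^ (k : ℕ)) ^ p * conj (I ^ (k : ℕ)) ^ q = if p = q then 4 else 0 := by
  interval_cases p <;> interval_cases q <;> simp [Fin.sum_univ_four, pow_succ] <;>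
    norm_num [Complex.ext_iff]

variable [DecidableEq ι]

lemma pair_count_eq_iff {a b c d : ι} :
    (∀ e, ((if e = b then 1 else 0) + (if e = c then 1 else 0) : ℕ)
        = (if e = a then 1 else 0) + (if e = d then 1 else 0)) ↔
      (a = b ∧ c = d) ∨ (a = c ∧ b = d) := by
  constructor
  · intro h
    by_cases hab : a = b
    · subst hab
      refine Or.inl ⟨rfl, by_contra fun hcd => ?_⟩
      simpa [hcd] using h c
    · have hac : a = c := by_contra fun hac => by
        have := h a
        split_ifs at this <;> simp_all
      subst hac
      refine Or.inr ⟨rfl, by_contra fun hbd => ?_⟩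
      simpa [hbd] using h b
  · rintro (⟨rfl, rfl⟩ | ⟨rfl, rfl⟩) e <;> omega

variable [Fintype ι]

lemma conj_mul_mul_mul_conj_eq_prod (z : ι → ℂ) (a b c d : ι) :
    conj (z a) * z b * z c * conj (z d) =
      ∏ e, z e ^ ((if e = b then 1 else 0) + (if e = c then 1 else 0)) *
        conj (z e) ^ ((if e = a then 1 else 0) + (if e = d then 1 else 0)) := by
  simp only [pow_add, prod_mul_distrib, pow_ite, pow_one, pow_zero]
  rw [prod_ite_eq' univ b, prod_ite_eq' univ c, prod_ite_eq' univ a, prod_ite_eq' univ d]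
  simp only [mem_univ, if_true]
  ring

lemma sum_phaseVec_moment (a b c d : ι) :
    ∑ ζ : ι → Fin 4, conj (phaseVec ζ a) * phaseVec ζ b * phaseVec ζ c * conj (phaseVec ζ d) =
      if (a = b ∧ c = d) ∨ (a = c ∧ b = d) then 4 ^ Fintype.card ι else 0 := by
  rw [sum_congr rfl fun ζ _ => conj_mul_mul_mul_conj_eq_prod (phaseVec ζ) a b c d]
  simp only [phaseVec]
  rw [← Fintype.prod_sum (fun e (k : Fin 4) => (I ^ (k : ℕ)) ^ _ * conj (I ^ (k : ℕ)) ^ _)]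
  have hle : ∀ e x y : ι, ((if e = x then 1 else 0) + (if e = y then 1 else 0) : ℕ) ≤ 2 := by
    intros; split_ifs <;> omega
  simp only [sum_fin_four_I_pow_mul_conj_pow (hle _ _ _) (hle _ _ _), Fintype.prod_ite_zero,
    prod_const, card_univ, pair_count_eq_iff]

end PhaseMoments

lemma ite_or_eq_add_sub {α : Type*} [Ring α] (p q : Prop) [Decidable p] [Decidable q] (x : α) :
    (if p ∨ q then x else 0) =
      (if p then x else 0) + (if q then x else 0) - if p ∧ q then x else 0 := by
  by_cases p <;> by_cases q <;> simp [*]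

section QuadraticForm

variable {ι κ : Type*} [Fintype ι] [Fintype κ]

lemma star_dotProduct_mulVec_eq_sum (M : Matrix ι ι ℂ) (v : ι → ℂ) :
    star v ⬝ᵥ M *ᵥ v = ∑ a, ∑ b, conj (v a) * M a b * v b := by
  simp [dotProduct, mulVec, mul_sum, mul_assoc]

lemma star_smul_dotProduct_mulVec_smul (M : Matrix ι ι ℂ) (r : ℝ) (v : ι → ℂ) :
    star (r • v) ⬝ᵥ M *ᵥ (r • v) = r ^ 2 • (star v ⬝ᵥ M *ᵥ v) := by
  rw [star_smul, mulVec_smul, dotProduct_smul, smul_dotProduct, smul_smul, star_trivial, sq]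

lemma sum_norm_sq_le_mul_sq_of_unit (M : κ → Matrix ι ι ℂ) {C : ℝ}
    (h : ∀ φ : ι → ℂ, ∑ a, ‖φ a‖ ^ 2 = 1 → ∑ k, ‖star φ ⬝ᵥ M k *ᵥ φ‖ ^ 2 ≤ C) (φ : ι → ℂ) :
    ∑ k, ‖star φ ⬝ᵥ M k *ᵥ φ‖ ^ 2 ≤ C * (∑ a, ‖φ a‖ ^ 2) ^ 2 := by
  obtain hs | hs := (sum_nonneg fun a _ => sq_nonneg ‖φ a‖).eq_or_lt
  · have hφ : φ = 0 := funext fun a => by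
      simpa using (sum_eq_zero_iff_of_nonneg fun a _ => sq_nonneg ‖φ a‖).1 hs.symm a (mem_univ a)
    subst hφ
    simp
  · have hunit : ∑ a, ‖((√(∑ a, ‖φ a‖ ^ 2))⁻¹ • φ) a‖ ^ 2 = 1 := by
      simp only [Pi.smul_apply, norm_smul, mul_pow, ← mul_sum, norm_inv, Real.norm_eq_abs,
        sq_abs, inv_pow, Real.sq_sqrt hs.le]
      exact inv_mul_cancel₀ hs.ne'
    have := h _ hunit
    simp only [star_smul_dotProduct_mulVec_smul, norm_smul, mul_pow, ← mul_sum, Real.norm_eq_abs,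
      sq_abs, inv_pow, Real.sq_sqrt hs.le] at this
    rwa [inv_mul_le_iff₀ (by positivity), mul_comm] at this

lemma sum_norm_sq_phaseVec (ζ : ι → Fin 4) : ∑ a, ‖phaseVec ζ a‖ ^ 2 = Fintype.card ι := by
  simp [phaseVec]

variable [DecidableEq ι]

lemma sum_norm_sq_star_phaseVec_dotProduct_mulVec (M : Matrix ι ι ℂ) :
    ∑ ζ : ι → Fin 4, ‖star (phaseVec ζ) ⬝ᵥ M *ᵥ phaseVec ζ‖ ^ 2 =
      4 ^ Fintype.card ι * (‖M.trace‖ ^ 2 + ∑ a, ∑ b, ‖M a b‖ ^ 2 - ∑ a, ‖M a a‖ ^ 2) := by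
  apply Complex.ofReal_injective
  push_cast
  simp only [← Complex.mul_conj', star_dotProduct_mulVec_eq_sum]
  calc ∑ ζ : ι → Fin 4, (∑ a, ∑ b, conj (phaseVec ζ a) * M a b * phaseVec ζ b) *
        conj (∑ c, ∑ d, conj (phaseVec ζ c) * M c d * phaseVec ζ d)
      = ∑ ζ : ι → Fin 4, ∑ a, ∑ b, ∑ c, ∑ d, M a b * conj (M c d) *
          (conj (phaseVec ζ a) * phaseVec ζ b * phaseVec ζ c * conj (phaseVec ζ d)) := by
        simp only [map_sum, map_mul, conj_conj, sum_mul]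
        simp only [mul_sum]
        refine sum_congr rfl fun ζ _ => sum_congr rfl fun a _ => sum_congr rfl fun b _ =>
          sum_congr rfl fun c _ => sum_congr rfl fun d _ => by ring
    _ = ∑ a, ∑ b, ∑ c, ∑ d, M a b * conj (M c d) * ∑ ζ : ι → Fin 4,
          conj (phaseVec ζ a) * phaseVec ζ b * phaseVec ζ c * conj (phaseVec ζ d) := by
        simp only [mul_sum]
        exact sum_comm.trans (sum_congr rfl fun a _ => sum_comm.trans (sum_congr rfl fun b _ =>
          sum_comm.trans (sum_congr rfl fun c _ => sum_comm)))
    _ = _ := by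
        simp only [sum_phaseVec_moment, ite_or_eq_add_sub, mul_add, mul_sub, mul_ite, mul_zero,
          ite_and, sum_add_distrib, sum_sub_distrib, sum_ite_eq, mem_univ, if_true, sum_ite_irrel,
          sum_const_zero]
        rw [trace, map_sum, sum_mul_sum]
        simp only [← sum_mul, Matrix.diag_apply]
        ring

lemma sum_norm_trace_sq_add_sub_le (M : κ → Matrix ι ι ℂ) {C : ℝ}
    (h : ∀ φ : ι → ℂ, ∑ a, ‖φ a‖ ^ 2 = 1 → ∑ k, ‖star φ ⬝ᵥ M k *ᵥ φ‖ ^ 2 ≤ C) :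
    ∑ k, ‖(M k).trace‖ ^ 2 + ∑ k, ∑ a, ∑ b, ‖M k a b‖ ^ 2 - ∑ k, ∑ a, ‖M k a a‖ ^ 2 ≤
      Fintype.card ι ^ 2 * C := by
  have hphase (ζ : ι → Fin 4) :
      ∑ k, ‖star (phaseVec ζ) ⬝ᵥ M k *ᵥ phaseVec ζ‖ ^ 2 ≤ Fintype.card ι ^ 2 * C := by
    simpa [sum_norm_sq_phaseVec, mul_comm] using sum_norm_sq_le_mul_sq_of_unit M h (phaseVec ζ)
  have hsum := sum_le_card_nsmul univ _ _ fun ζ _ => hphase ζ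
  rw [sum_comm] at hsum
  simp only [sum_norm_sq_star_phaseVec_dotProduct_mulVec, ← mul_sum, card_univ, Fintype.card_fun, Fintype.card_fin,
    nsmul_eq_mul, sum_add_distrib, sum_sub_distrib] at hsum
  exact le_of_mul_le_mul_left (by exact_mod_cast hsum) (by positivity)

lemma star_single_dotProduct_mulVec_single (M : Matrix ι ι ℂ) (a : ι) :
    star (Pi.single a 1 : ι → ℂ) ⬝ᵥ M *ᵥ Pi.single a 1 = M a a := by
  simp [Pi.star_single, single_dotProduct]

lemma sum_norm_sq_single (a : ι) : ∑ b, ‖(Pi.single a 1 : ι → ℂ) b‖ ^ 2 = 1 := by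
  rw [Fintype.sum_eq_single a fun b hb => by simp [hb]]
  simp

lemma sum_sum_norm_diag_sq_le (M : κ → Matrix ι ι ℂ) {C : ℝ}
    (h : ∀ φ : ι → ℂ, ∑ a, ‖φ a‖ ^ 2 = 1 → ∑ k, ‖star φ ⬝ᵥ M k *ᵥ φ‖ ^ 2 ≤ C) :
    ∑ k, ∑ a, ‖M k a a‖ ^ 2 ≤ Fintype.card ι * C := by
  rw [sum_comm, ← nsmul_eq_mul, ← card_univ]
  refine sum_le_card_nsmul _ _ _ fun a _ => ?_
  simpa [star_single_dotProduct_mulVec_single] using h _ (sum_norm_sq_single a)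

end QuadraticForm

section Frobenius

variable {ι κ : Type*} [Fintype ι] [Fintype κ]

lemma trace_mul_conjTranspose_eq_sum_norm_sq (A : Matrix ι κ ℂ) :
    (A * Aᴴ).trace = ∑ a, ∑ b, (‖A a b‖ ^ 2 : ℂ) := by
  simp [trace, mul_apply, Complex.mul_conj']

lemma norm_trace_sq_le_card_mul_sum_norm_sq (A : Matrix ι ι ℂ) :
    ‖A.trace‖ ^ 2 ≤ Fintype.card ι * ∑ a, ∑ b, ‖A a b‖ ^ 2 :=
  calc ‖A.trace‖ ^ 2 ≤ (∑ a, ‖A a a‖) ^ 2 := by gcongr; exact norm_sum_le _ _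
    _ ≤ Fintype.card ι * ∑ a, ‖A a a‖ ^ 2 := sq_sum_le_card_mul_sum_sq
    _ ≤ Fintype.card ι * ∑ a, ∑ b, ‖A a b‖ ^ 2 := by
      gcongr with a
      exact single_le_sum (f := fun b => ‖A a b‖ ^ 2) (fun b _ => by positivity) (mem_univ a)

lemma sum_sum_norm_sq_conjTranspose_mul (K : κ → Matrix ι ι ℂ) :
    ∑ i, ∑ j, ∑ a, ∑ b, ‖((K i)ᴴ * K j) a b‖ ^ 2 =
      ∑ a, ∑ b, ‖(∑ i, K i * (K i)ᴴ) a b‖ ^ 2 := by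
  apply Complex.ofReal_injective
  push_cast
  have hA : (∑ i, K i * (K i)ᴴ)ᴴ = ∑ i, K i * (K i)ᴴ := by
    simp [conjTranspose_sum, conjTranspose_mul]
  rw [← trace_mul_conjTranspose_eq_sum_norm_sq, hA, sum_mul, trace_sum]
  simp only [mul_sum, trace_sum, ← trace_mul_conjTranspose_eq_sum_norm_sq, conjTranspose_mul,
    conjTranspose_conjTranspose]
  rw [sum_comm]
  refine sum_congr rfl fun i _ => sum_congr rfl fun j _ => ?_
  rw [show (K j)ᴴ * K i * ((K i)ᴴ * K j) = (K j)ᴴ * (K i * (K i)ᴴ * K j) by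
    simp only [Matrix.mul_assoc], trace_mul_comm, Matrix.mul_assoc]

lemma card_le_sum_sum_norm_sq_conjTranspose_mul [DecidableEq ι] (K : κ → Matrix ι ι ℂ)
    (hK : ∑ i, (K i)ᴴ * K i = 1) :
    (Fintype.card ι : ℝ) ≤ ∑ i, ∑ j, ∑ a, ∑ b, ‖((K i)ᴴ * K j) a b‖ ^ 2 := by
  set A := ∑ i, K i * (K i)ᴴ
  have htrace : A.trace = Fintype.card ι := by
    simp only [A, trace_sum, trace_mul_comm (K _)]
    rw [← trace_sum, hK, trace_one]
  have := norm_trace_sq_le_card_mul_sum_norm_sq A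
  rw [htrace, Complex.norm_natCast, sq] at this
  rw [sum_sum_norm_sq_conjTranspose_mul]
  rcases (Fintype.card ι).eq_zero_or_pos with h0 | hpos
  · rw [h0, Nat.cast_zero]
    positivity
  · exact le_of_mul_le_mul_left this (by exact_mod_cast hpos)

end Frobenius

/-- Let `K₁,…,K_m` be Kraus operators of a quantum channel on `ℂⁿ`
(`Σᵢ Kᵢᴴ Kᵢ = I`).  If every unit vector `φ` satisfies
`Σ_{i,j} |⟨φ|Kᵢᴴ Kⱼ|φ⟩|² ≤ 1 − ε` for some `ε ∈ (0,1)`, then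
`(1/n²) Σ_{i,j} |Tr(Kᵢᴴ Kⱼ)|² ≤ 1 − (1 + 1/n)ε`. -/
theorem jamiolkowski_purity_le {n m : ℕ} (K : Fin m → Matrix (Fin n) (Fin n) ℂ)
    (hK : ∑ i, (K i)ᴴ * K i = 1) (ε : ℝ) (hε : ε ∈ Set.Ioo (0 : ℝ) 1)
    (hout : ∀ φ : Fin n → ℂ, (∑ k, ‖φ k‖ ^ 2 = 1) →
      ∑ i, ∑ j, ‖star φ ⬝ᵥ ((K i)ᴴ * K j).mulVec φ‖ ^ 2 ≤ 1 - ε) :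
    (1 / (n : ℝ) ^ 2) * ∑ i, ∑ j, ‖((K i)ᴴ * K j).trace‖ ^ 2 ≤
      1 - (1 + 1 / (n : ℝ)) * ε := by
  set M : Fin m × Fin m → Matrix (Fin n) (Fin n) ℂ := fun p => (K p.1)ᴴ * K p.2
  have hunit (φ : Fin n → ℂ) (hφ : ∑ k, ‖φ k‖ ^ 2 = 1) :
      ∑ p, ‖star φ ⬝ᵥ M p *ᵥ φ‖ ^ 2 ≤ 1 - ε :=
    (Fintype.sum_prod_type' _).trans_le (hout φ hφ)
  have htrace := sum_norm_trace_sq_add_sub_le M hunit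
  have hdiag := sum_sum_norm_diag_sq_le M hunit
  have hfrob := card_le_sum_sum_norm_sq_conjTranspose_mul K hK
  simp only [M, Fintype.sum_prod_type, Fintype.card_fin] at htrace hdiag hfrob
  have hT : ∑ i, ∑ j, ‖((K i)ᴴ * K j).trace‖ ^ 2 ≤ n ^ 2 * (1 - ε) - n * ε := by linarith
  rcases n.eq_zero_or_pos with rfl | hn
  · simpa using hε.2.le
  · calc _ ≤ 1 / (n : ℝ) ^ 2 * (n ^ 2 * (1 - ε) - n * ε) := by gcongr
      _ = 1 - (1 + 1 / (n : ℝ)) * ε := by field_simp; ring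
end

section
/- If Λ is a unital trace-preserving CP map on n×n matrices, then for every density matrix ρ on ℂⁿ⊗ℂᵐ, S((Λ⊗id)(ρ)) ≥ S(ρ), where S is the von Neumann entropy. -/
open Matrix Kronecker
open scoped ComplexOrder

/-- The von Neumann entropy `S(ρ) = −Tr(ρ log ρ)` of a (Hermitian) matrix, computed
through its eigenvalues (with the convention `0 log 0 = 0`); junk value `0` for
non-Hermitian input. -/
noncomputable def vonNeumannEntropy {ι : Type*} [Fintype ι] [DecidableEq ι]
    (ρ : Matrix ι ι ℂ) : ℝ :=
  if h : ρ.IsHermitian then -∑ i, h.eigenvalues i * Real.log (h.eigenvalues i) else 0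

/-!
In eigenbases of `ρ` and of `σ = Σ_α A_α ρ A_αᴴ`, write `M_α = Uᴴ A_α W`. Then
`diag(μ) = Σ_α M_α diag(λ) M_αᴴ`, so the eigenvalues satisfy `μ = B λ` with
`B_{ji} = Σ_α |(M_α)_{ji}|²`. The two Kraus conditions `Σ A_αᴴ A_α = 1 = Σ A_α A_αᴴ` survive the
unitary change of basis and say exactly that `B` is doubly stochastic. Jensen's inequality for
the concave function `-x log x`, applied row by row, then gives `S(ρ) ≤ S(σ)`.
For `Λ ⊗ id` the Kraus operators are `K_α ⊗ 1`.
-/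

theorem ConcaveOn.sum_le_sum_mulVec_of_mem_doublyStochastic {ι : Type*} [Fintype ι]
    [DecidableEq ι] {s : Set ℝ} {f : ℝ → ℝ} (hf : ConcaveOn ℝ s f) {B : Matrix ι ι ℝ}
    (hB : B ∈ doublyStochastic ℝ ι) {x : ι → ℝ} (hx : ∀ i, x i ∈ s) :
    ∑ i, f (x i) ≤ ∑ j, f ((B *ᵥ x) j) :=
  calc ∑ i, f (x i) = ∑ i, (∑ j, B j i) * f (x i) := by
        simp only [sum_col_of_mem_doublyStochastic hB, one_mul]
    _ = ∑ j, ∑ i, B j i • f (x i) := by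
        simp only [Finset.sum_mul, smul_eq_mul]
        exact Finset.sum_comm
    _ ≤ ∑ j, f (∑ i, B j i • x i) := Finset.sum_le_sum fun j _ =>
        hf.le_map_sum (fun _ _ => nonneg_of_mem_doublyStochastic hB)
          (sum_row_of_mem_doublyStochastic hB j) fun i _ => hx i
    _ = ∑ j, f ((B *ᵥ x) j) := by simp only [mulVec, dotProduct, smul_eq_mul]

theorem vonNeumannEntropy_eq_sum_negMulLog {ι : Type*} [Fintype ι] [DecidableEq ι]
    {ρ : Matrix ι ι ℂ} (hρ : ρ.IsHermitian) :
    vonNeumannEntropy ρ = ∑ i, Real.negMulLog (hρ.eigenvalues i) := by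
  simp [vonNeumannEntropy, hρ, Real.negMulLog]

namespace Matrix

theorem sum_kronecker {ι l m n p α : Type*} [NonUnitalNonAssocSemiring α]
    (s : Finset ι) (A : ι → Matrix l m α) (B : Matrix n p α) :
    (∑ i ∈ s, A i) ⊗ₖ B = ∑ i ∈ s, A i ⊗ₖ B := by
  ext
  simp [sum_apply, Finset.sum_mul]

variable {ι N : Type*} [Fintype ι] [Fintype N] [DecidableEq N]

theorem mul_diagonal_mul_conjTranspose_apply_self (M : Matrix N N ℂ) (d : N → ℝ) (j : N) :
    (M * diagonal (fun i => (d i : ℂ)) * Mᴴ) j j =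
      ((∑ i, Complex.normSq (M j i) * d i : ℝ) : ℂ) := by
  rw [mul_apply]
  simp only [mul_diagonal, conjTranspose_apply, Complex.star_def]
  push_cast
  refine Finset.sum_congr rfl fun i _ => ?_
  rw [← Complex.mul_conj]
  ring

theorem sum_conjTranspose_mul_self_conj {R : Type*} [Semiring R] [StarRing R]
    {A : ι → Matrix N N R} (hA : ∑ α, (A α)ᴴ * A α = 1)
    {U W : Matrix N N R} (hU : U * Uᴴ = 1) (hW : Wᴴ * W = 1) :
    ∑ α, (Uᴴ * A α * W)ᴴ * (Uᴴ * A α * W) = 1 := by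
  have h : ∀ α, (Uᴴ * A α * W)ᴴ * (Uᴴ * A α * W) = Wᴴ * ((A α)ᴴ * A α) * W := fun α => by
    simp only [conjTranspose_mul, conjTranspose_conjTranspose, Matrix.mul_assoc]
    rw [← Matrix.mul_assoc U, hU, Matrix.one_mul]
  simp only [h, ← Finset.sum_mul, ← Finset.mul_sum, hA, Matrix.mul_one, hW]

theorem mul_conjTranspose_apply_self (M : Matrix N N ℂ) (j : N) :
    (M * Mᴴ) j j = ((∑ i, Complex.normSq (M j i) : ℝ) : ℂ) := by
  simpa using mul_diagonal_mul_conjTranspose_apply_self M 1 j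

theorem of_sum_normSq_mem_doublyStochastic {M : ι → Matrix N N ℂ}
    (h₁ : ∑ α, (M α)ᴴ * M α = 1) (h₂ : ∑ α, M α * (M α)ᴴ = 1) :
    of (fun j i => ∑ α, Complex.normSq (M α j i)) ∈ doublyStochastic ℝ N := by
  refine mem_doublyStochastic_iff_sum.2
    ⟨fun j i => Finset.sum_nonneg fun α _ => Complex.normSq_nonneg _, fun j => ?_, fun i => ?_⟩
  · apply Complex.ofReal_injective
    have := congr($h₂ j j)
    simp only [sum_apply, mul_conjTranspose_apply_self, one_apply_eq] at this
    simpa [Finset.sum_comm (γ := ι)] using this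
  · apply Complex.ofReal_injective
    have hcol : ∀ α, ((M α)ᴴ * M α) i i = ((∑ j, Complex.normSq (M α j i) : ℝ) : ℂ) :=
      fun α => by simpa using mul_conjTranspose_apply_self (M α)ᴴ i
    have := congr($h₁ i i)
    simp only [sum_apply, hcol, one_apply_eq] at this
    simpa [Finset.sum_comm (γ := ι)] using this

theorem IsHermitian.exists_mem_doublyStochastic_eigenvalues_sum_mul_mul_conjTranspose_eq
    {A : ι → Matrix N N ℂ} (hTP : ∑ α, (A α)ᴴ * A α = 1) (hU : ∑ α, A α * (A α)ᴴ = 1)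
    {ρ : Matrix N N ℂ} (hρ : ρ.IsHermitian) (hσ : (∑ α, A α * ρ * (A α)ᴴ).IsHermitian) :
    ∃ B ∈ doublyStochastic ℝ N, hσ.eigenvalues = B *ᵥ hρ.eigenvalues := by
  set W : Matrix N N ℂ := ↑hρ.eigenvectorUnitary
  set U : Matrix N N ℂ := ↑hσ.eigenvectorUnitary
  have hW : W * Wᴴ = 1 ∧ Wᴴ * W = 1 :=
    ⟨mem_unitaryGroup_iff.1 hρ.eigenvectorUnitary.2,
      mem_unitaryGroup_iff'.1 hρ.eigenvectorUnitary.2⟩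
  have hU' : U * Uᴴ = 1 ∧ Uᴴ * U = 1 :=
    ⟨mem_unitaryGroup_iff.1 hσ.eigenvectorUnitary.2,
      mem_unitaryGroup_iff'.1 hσ.eigenvectorUnitary.2⟩
  set M : ι → Matrix N N ℂ := fun α => Uᴴ * A α * W
  have hM₁ : ∑ α, (M α)ᴴ * M α = 1 := sum_conjTranspose_mul_self_conj hTP hU'.1 hW.2
  have hM_conjTranspose : ∀ α, (M α)ᴴ = Wᴴ * (A α)ᴴ * U := fun α => by
    simp only [M, conjTranspose_mul, conjTranspose_conjTranspose, Matrix.mul_assoc]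
  have hM₂ : ∑ α, M α * (M α)ᴴ = 1 := by
    have := sum_conjTranspose_mul_self_conj (A := fun α => (A α)ᴴ)
      (by simpa only [conjTranspose_conjTranspose] using hU) hW.1 hU'.2
    simpa only [← hM_conjTranspose, conjTranspose_conjTranspose] using this
  refine ⟨_, of_sum_normSq_mem_doublyStochastic hM₁ hM₂,
    funext fun j => Complex.ofReal_injective ?_⟩
  have hdiag : diagonal (fun i => (hσ.eigenvalues i : ℂ)) =
      ∑ α, M α * diagonal (fun i => (hρ.eigenvalues i : ℂ)) * (M α)ᴴ := by
    have hσ_diag := hσ.conjStarAlgAut_star_eigenvectorUnitary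
    have hρ_spec := hρ.spectral_theorem
    rw [Unitary.conjStarAlgAut_apply, Unitary.coe_star, star_star] at hσ_diag
    rw [Unitary.conjStarAlgAut_apply] at hρ_spec
    calc diagonal (fun i => (hσ.eigenvalues i : ℂ))
        = Uᴴ * (∑ α, A α * ρ * (A α)ᴴ) * U := hσ_diag.symm
      _ = ∑ α, M α * diagonal (fun i => (hρ.eigenvalues i : ℂ)) * (M α)ᴴ := by
        simp only [Finset.mul_sum, Finset.sum_mul, hM_conjTranspose]
        refine Finset.sum_congr rfl fun α _ => ?_
        conv_lhs => rw [hρ_spec]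
        simp only [M, Matrix.mul_assoc]
        rfl
  have := congr($hdiag j j)
  simp only [diagonal_apply_eq, sum_apply, mul_diagonal_mul_conjTranspose_apply_self] at this
  rw [this]
  simp [mulVec, dotProduct, Finset.sum_mul, Finset.sum_comm (γ := ι)]

end Matrix

theorem vonNeumannEntropy_le_vonNeumannEntropy_sum_mul_mul_conjTranspose
    {ι N : Type*} [Fintype ι] [Fintype N] [DecidableEq N] {A : ι → Matrix N N ℂ}
    (hTP : ∑ α, (A α)ᴴ * A α = 1) (hU : ∑ α, A α * (A α)ᴴ = 1)
    {ρ : Matrix N N ℂ} (hρ : ρ.PosSemidef) :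
    vonNeumannEntropy ρ ≤ vonNeumannEntropy (∑ α, A α * ρ * (A α)ᴴ) := by
  have hσ : (∑ α, A α * ρ * (A α)ᴴ).IsHermitian :=
    (posSemidef_sum _ fun α _ => hρ.mul_mul_conjTranspose_same (A α)).1
  obtain ⟨B, hB, hσB⟩ :=
    hρ.1.exists_mem_doublyStochastic_eigenvalues_sum_mul_mul_conjTranspose_eq hTP hU hσ
  rw [vonNeumannEntropy_eq_sum_negMulLog hρ.1, vonNeumannEntropy_eq_sum_negMulLog hσ, hσB]
  exact Real.concaveOn_negMulLog.sum_le_sum_mulVec_of_mem_doublyStochastic hB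
    hρ.eigenvalues_nonneg

theorem entropy_nondecreasing_bistochastic_general {k n m : ℕ}
    (K : Fin k → Matrix (Fin n) (Fin n) ℂ)
    (hTP : ∑ i, (K i)ᴴ * K i = 1) (hU : ∑ i, K i * (K i)ᴴ = 1)
    (ρ : Matrix (Fin n × Fin m) (Fin n × Fin m) ℂ)
    (hρ : ρ.PosSemidef) :
    vonNeumannEntropy ρ ≤
      vonNeumannEntropy
        (∑ i, (K i ⊗ₖ (1 : Matrix (Fin m) (Fin m) ℂ)) * ρ *
          (K i ⊗ₖ (1 : Matrix (Fin m) (Fin m) ℂ))ᴴ) := by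
  refine vonNeumannEntropy_le_vonNeumannEntropy_sum_mul_mul_conjTranspose ?_ ?_ hρ <;>
    simp only [conjTranspose_kronecker, conjTranspose_one, ← mul_kronecker_mul, mul_one,
      ← sum_kronecker, hTP, hU, one_kronecker_one]

/-- If `Λ = Σᵢ Ad_{Kᵢ}` is a unital trace-preserving CP map on `n×n`
matrices, then for every density matrix `ρ` on `ℂⁿ⊗ℂᵐ`,
`S((Λ⊗id)(ρ)) ≥ S(ρ)` for the von Neumann entropy `S`. -/
theorem entropy_nondecreasing_bistochastic {k n m : ℕ}
    (K : Fin k → Matrix (Fin n) (Fin n) ℂ)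
    (hTP : ∑ i, (K i)ᴴ * K i = 1) (hU : ∑ i, K i * (K i)ᴴ = 1)
    (ρ : Matrix (Fin n × Fin m) (Fin n × Fin m) ℂ)
    (hρ : ρ.PosSemidef) (hρ1 : ρ.trace = 1) :
    vonNeumannEntropy ρ ≤
      vonNeumannEntropy
        (∑ i, (K i ⊗ₖ (1 : Matrix (Fin m) (Fin m) ℂ)) * ρ *
          (K i ⊗ₖ (1 : Matrix (Fin m) (Fin m) ℂ))ᴴ) :=
  entropy_nondecreasing_bistochastic_general K hTP hU ρ hρ
end
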